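/- Let d ≥ j_1 ≥ j_2 ≥ ... ≥ j_h ≥ 1 and let X_{j_1}, ..., X_{j_h} ⊂ F_q^s be sets of cardinalities j_1, ..., j_h. Let a_1, ..., a_h ∈ F_q^{r−s} be such that the h × h matrix M with rows (1, a_{i,1}, ..., a_{i,h−1}) is invertible. Then the number of s-tuples (F_1, ..., F_s) of polynomials of degree at most d in F_q[X_1, ..., X_r] satisfying F_k(a_i, x) = 0 for all x ∈ X_{j_i}, all 1 ≤ i ≤ h and 1 ≤ k ≤ s, equals q^{s(dim F_d − (j_1 + ... + j_h))}, where dim F_d = C(d+r, r). -/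

import Mathlib

open MvPolynomial Module Matrix

/-!
Evaluation at the `∑ jᵢ` points `(aᵢ, x)` is a linear map from the polynomials of degree at
most `d` onto `F_q^(∑ jᵢ)`: the point `(a_{i₀}, x₀)` has an indicator polynomial of degree at
most `j_{i₀} ≤ d`, namely the affine form in the `a`-coordinates whose coefficients form column
`i₀` of `M⁻¹` (it is `1` on block `i₀` and `0` on the other blocks), times a product of
`j_{i₀} - 1` linear forms in the `x`-coordinates separating `x₀` from the rest of its block.
Hence the kernel has dimension `C(d+r, r) - ∑ jᵢ`, and the tuples counted are the `s`-tuples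
of kernel elements.
-/

def sumLeEquivOptionSumEq (σ : Type*) [Fintype σ] (d : ℕ) :
    {g : σ → ℕ // ∑ i, g i ≤ d} ≃ {P : Option σ → ℕ // ∑ o, P o = d} where
  toFun g := ⟨fun o => o.elim (d - ∑ i, g.1 i) g.1, by
    have := g.2
    simp only [Fintype.sum_option, Option.elim_none, Option.elim_some]
    omega⟩
  invFun P := ⟨fun i => P.1 (some i), by
    have := P.2
    rw [Fintype.sum_option] at this
    exact Nat.le.intro ((add_comm _ _).trans this)⟩
  left_inv g := rfl
  right_inv P := by
    obtain ⟨P, hP⟩ := P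
    rw [Fintype.sum_option] at hP
    ext (_ | i)
    · simp only [Option.elim_none]
      omega
    · rfl

theorem MvPolynomial.finrank_restrictTotalDegree (σ K : Type*) [Fintype σ] [Field K] (d : ℕ) :
    finrank K (restrictTotalDegree σ K d) = (d + Fintype.card σ).choose (Fintype.card σ) := by
  classical
  let e : {n : σ →₀ ℕ | (n.sum fun _ e => e) ≤ d} ≃ Sym (Option σ) d :=
    (Finsupp.equivFunOnFinite.subtypeEquiv fun n => by simp [Finsupp.sum_fintype]).trans <|
      (sumLeEquivOptionSumEq σ d).trans (Sym.equivNatSumOfFintype (Option σ) d).symm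
  rw [restrictTotalDegree, finrank_eq_nat_card_basis (basisRestrictSupport K _), Nat.card_congr e,
    Nat.card_eq_fintype_card, Sym.card_sym_eq_choose, Fintype.card_option,
    Nat.add_right_comm, Nat.add_sub_cancel, add_comm, Nat.choose_symm_add]

theorem Submodule.natCard_pi_subtype_forall_mem {K V ι : Type*} [Field K] [Fintype K]
    [AddCommGroup V] [Module K V] [Fintype ι] (W : Submodule K V) [Module.Finite K W] :
    Nat.card {F : ι → V // ∀ k, F k ∈ W} = Fintype.card K ^ (Fintype.card ι * finrank K W) := by
  rw [Nat.card_congr (Equiv.subtypePiEquivPi), Nat.card_fun, Module.natCard_eq_pow_finrank (K := K),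
    Nat.card_eq_fintype_card, Nat.card_eq_fintype_card, ← pow_mul, mul_comm]

namespace MvPolynomial

variable {σ ι K : Type*} [Field K]

theorem exists_totalDegree_le_eval_eq_single [Fintype ι] [DecidableEq ι] {x : ι → σ → K}
    (hx : Function.Injective x) (i₀ : ι) :
    ∃ P : MvPolynomial σ K, P.totalDegree ≤ Fintype.card ι - 1 ∧
      ∀ i, eval (x i) P = (Pi.single i₀ 1 : ι → K) i := by
  have hsep : ∀ i : {i // i ≠ i₀}, ∃ k, x i₀ k ≠ x i k := fun i =>
    Function.ne_iff.mp fun h => i.2 (hx h).symm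
  choose k hk using hsep
  refine ⟨∏ i, C (x i₀ (k i) - x i (k i))⁻¹ * (X (k i) - C (x i (k i))), ?_, fun i => ?_⟩
  · calc _ ≤ ∑ i : {i // i ≠ i₀}, 1 := (totalDegree_finsetProd _ _).trans <|
          Finset.sum_le_sum fun i _ => (totalDegree_mul _ _).trans <| by
            rw [totalDegree_C, zero_add]
            exact (totalDegree_sub _ _).trans (by simp)
      _ = Fintype.card ι - 1 := by simp
  · rw [map_prod]
    by_cases hi : i = i₀
    · subst hi
      simp only [eval_mul, eval_C, eval_sub, eval_X, Pi.single_eq_same]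
      exact Finset.prod_eq_one fun i _ => inv_mul_cancel₀ (sub_ne_zero.mpr (hk i))
    · rw [Pi.single_eq_of_ne hi]
      exact Finset.prod_eq_zero (Finset.mem_univ ⟨i, hi⟩) (by simp)

theorem exists_totalDegree_le_one_eval_eq_single {n : ℕ} (v : Fin (n + 1) → Fin n → K)
    (hv : (Matrix.of fun i => Fin.cons (1 : K) (v i)).det ≠ 0) (i₀ : Fin (n + 1)) :
    ∃ L : MvPolynomial (Fin n) K, L.totalDegree ≤ 1 ∧
      ∀ i, eval (v i) L = (Pi.single i₀ 1 : Fin (n + 1) → K) i := by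
  set M : Matrix (Fin (n + 1)) (Fin (n + 1)) K := Matrix.of fun i => Fin.cons 1 (v i)
  set c := M⁻¹ *ᵥ Pi.single i₀ 1
  have hMc : M *ᵥ c = Pi.single i₀ 1 := by
    rw [Matrix.mulVec_mulVec, Matrix.mul_nonsing_inv _ (isUnit_iff_ne_zero.mpr hv),
      Matrix.one_mulVec]
  refine ⟨C (c 0) + ∑ l, C (c l.succ) * X l, ?_, fun i => ?_⟩
  · refine (totalDegree_add _ _).trans (max_le (by simp) ?_)
    refine (totalDegree_finsetSum _ _).trans (Finset.sup_le fun l _ => ?_)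
    exact (totalDegree_mul _ _).trans (by simp)
  · rw [← hMc, Matrix.mulVec, dotProduct, Fin.sum_univ_succ]
    simp [M, mul_comm]

noncomputable def evalRestrictTotalDegree (d : ℕ) (p : ι → σ → K) :
    restrictTotalDegree σ K d →ₗ[K] ι → K :=
  LinearMap.pi fun q => (aeval (p q)).toLinearMap ∘ₗ (restrictTotalDegree σ K d).subtype

@[simp]
theorem evalRestrictTotalDegree_apply (d : ℕ) (p : ι → σ → K) (F : restrictTotalDegree σ K d)
    (q : ι) : evalRestrictTotalDegree d p F q = eval (p q) (F : MvPolynomial σ K) :=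
  rfl

theorem evalRestrictTotalDegree_surjective [Fintype ι] [DecidableEq ι] {d : ℕ} {p : ι → σ → K}
    (h : ∀ q, ∃ G : MvPolynomial σ K, G.totalDegree ≤ d ∧
      ∀ q', eval (p q') G = (Pi.single q 1 : ι → K) q') :
    Function.Surjective (evalRestrictTotalDegree d p) := by
  choose G hGdeg hG using h
  intro f
  refine ⟨∑ q, f q • ⟨G q, (mem_restrictTotalDegree _ _ _).mpr (hGdeg q)⟩, ?_⟩
  ext q'
  simp [hG, Pi.single_apply]

theorem finrank_ker_evalRestrictTotalDegree [Fintype σ] [Fintype ι] {d : ℕ} {p : ι → σ → K}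
    (hp : Function.Surjective (evalRestrictTotalDegree d p)) :
    finrank K (LinearMap.ker (evalRestrictTotalDegree d p)) =
      (d + Fintype.card σ).choose (Fintype.card σ) - Fintype.card ι := by
  have := (evalRestrictTotalDegree d p).finrank_range_add_finrank_ker
  rw [LinearMap.range_eq_top.mpr hp, finrank_top, finrank_fintype_fun_eq_card,
    finrank_restrictTotalDegree] at this
  omega

end MvPolynomial

theorem exists_totalDegree_le_eval_append_eq_single {K : Type*} [Field K] {n n' s : ℕ}
    {j : Fin (n + 1) → ℕ} (c : Fin n → Fin n') (a : Fin (n + 1) → Fin n' → K)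
    (X : (i : Fin (n + 1)) → Fin (j i) → Fin s → K) (hX : ∀ i, Function.Injective (X i))
    (hM : (Matrix.of fun i => Fin.cons (1 : K) (fun l => a i (c l))).det ≠ 0)
    (q : Σ i, Fin (j i)) :
    ∃ G : MvPolynomial (Fin (n' + s)) K, G.totalDegree ≤ j q.1 ∧
      ∀ q' : Σ i, Fin (j i), eval (Fin.append (a q'.1) (X q'.1 q'.2)) G =
        (Pi.single q 1 : (Σ i, Fin (j i)) → K) q' := by
  classical
  obtain ⟨i₀, m₀⟩ := q
  obtain ⟨L, hLdeg, hL⟩ := exists_totalDegree_le_one_eval_eq_single (fun i l => a i (c l)) hM i₀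
  obtain ⟨P, hPdeg, hP⟩ := exists_totalDegree_le_eval_eq_single (hX i₀) m₀
  refine ⟨rename (Fin.castAdd s ∘ c) L * rename (Fin.natAdd n') P, ?_, ?_⟩
  · have : 0 < j i₀ := m₀.pos
    calc _ ≤ L.totalDegree + P.totalDegree := (totalDegree_mul _ _).trans <|
          add_le_add (totalDegree_rename_le _ _) (totalDegree_rename_le _ _)
      _ ≤ j i₀ := by simp only [Fintype.card_fin] at hPdeg; omega
  · rintro ⟨i, m⟩
    simp only [eval_mul, eval_rename, Function.comp_def, Fin.append_left, Fin.append_right]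
    rw [hL i]
    by_cases hi : i = i₀
    · subst hi
      rw [hP m]
      simp [Pi.single_apply]
    · simp [hi]

/-- With `d ≥ j_1 ≥ ⋯ ≥ j_h ≥ 1`, sets `X_{j_i} ⊆ F_q^s` of cardinality `j_i`, and
`a_1, …, a_h ∈ F_q^{r−s}` (here `h = n+1`) whose associated matrix with rows
`(1, a_{i,1}, …, a_{i,h−1})` is invertible, the number of `s`-tuples of polynomials of degree
at most `d` vanishing at all the corresponding points is `q^{s(C(d+r,r) − Σᵢ jᵢ)}`. -/
theorem card_tuples_polynomials_vanishing (Fq : Type*) [Field Fq] [Fintype Fq]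
    (r s d n : ℕ) (hsr : s < r) (hn : n ≤ r - s)
    (j : Fin (n + 1) → ℕ) (hjd : ∀ i, j i ≤ d)
    (X : (i : Fin (n + 1)) → Fin (j i) → (Fin s → Fq)) (hX : ∀ i, Function.Injective (X i))
    (a : Fin (n + 1) → (Fin (r - s) → Fq))
    (hM : (Matrix.of fun i : Fin (n + 1) =>
        Fin.cons (1 : Fq) (fun l : Fin n => a i (Fin.castLE hn l))).det ≠ 0) :
    Nat.card {F : Fin s → MvPolynomial.restrictTotalDegree (Fin r) Fq d //
        ∀ (k : Fin s) (i : Fin (n + 1)) (m : Fin (j i)),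
          MvPolynomial.eval
            (fun t : Fin r => Fin.append (a i) (X i m) (Fin.cast (by omega) t))
            (F k : MvPolynomial (Fin r) Fq) = 0} =
      Fintype.card Fq ^ (s * (Nat.choose (d + r) r - ∑ i, j i)) := by
  classical
  have hr : r = r - s + s := by omega
  set p : (Σ i, Fin (j i)) → Fin r → Fq := fun q t => Fin.append (a q.1) (X q.1 q.2) (Fin.cast hr t)
  have hp : Function.Surjective (evalRestrictTotalDegree d p) :=
    evalRestrictTotalDegree_surjective fun q => by
      obtain ⟨G, hGdeg, hG⟩ :=
        exists_totalDegree_le_eval_append_eq_single (Fin.castLE hn) a X hX hM q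
      refine ⟨rename (Fin.cast hr.symm) G, (totalDegree_rename_le _ _).trans (hGdeg.trans (hjd _)),
        fun q' => ?_⟩
      rw [eval_rename, ← hG q']
      rfl -- `Fin.cast hr ∘ Fin.cast hr.symm` reduces to the identity
  calc _ = Nat.card {F : Fin s → _ // ∀ k, F k ∈ LinearMap.ker (evalRestrictTotalDegree d p)} :=
        Nat.card_congr <| Equiv.subtypeEquivRight fun F => by
          simp [LinearMap.mem_ker, _root_.funext_iff, Sigma.forall, p]
    _ = _ := by
      rw [Submodule.natCard_pi_subtype_forall_mem, finrank_ker_evalRestrictTotalDegree hp,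
        Fintype.card_fin, Fintype.card_fin, Fintype.card_sigma]
      simp
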